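/- Let G be a bipartite graph with parts A, B and let H be a subgraph whose edge set is a clique in L(G)². If M is a matching of size m in the bipartite complement of G (the graph on (A,B) whose edges are the non-edges of G between A and B), then |E(H)| ≤ |A|·|B| − m − m(m−1)/2. -/

import Mathlib

/-!
Orient the edges of `H` from `A` to `B` and look at the grid `{(p.1, q.2) : p, q ∈ M} ⊆ A × B`,
of size `m²` since `M` is a matching. Its diagonal avoids `H` because `M` avoids `G`, and for
`p ≠ q` the cross pairs `(p.1, q.2)` and `(q.1, p.2)` are not both edges of `H`: as edges of `G`
they would be at distance at least 3. Hence `H` meets the grid in at most `m(m-1)/2` pairs, and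
`|E(H)| ≤ |A|·|B| - m² + m(m-1)/2`.
-/

/-- Two edges of `G` at distance at most 2 (adjacency or equality in `L(G)²`). -/
def EdgesClose {V : Type*} (G : SimpleGraph V) (e f : Sym2 V) : Prop :=
  ∃ u v, u ∈ e ∧ v ∈ f ∧ (u = v ∨ G.Adj u v)

open Finset

theorem two_mul_card_filter_offDiag_le {ι : Type*} [DecidableEq ι] (M : Finset ι)
    (r : ι → ι → Prop) [DecidableRel r] (hr : ∀ i ∈ M, ∀ j ∈ M, i ≠ j → ¬(r i j ∧ r j i)) :
    2 * #{x ∈ M.offDiag | r x.1 x.2} ≤ #M * (#M - 1) := by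
  set S := {x ∈ M.offDiag | r x.1 x.2}
  have hdisj : Disjoint S (S.map (Equiv.prodComm ι ι).toEmbedding) := by
    simp only [S, disjoint_left, mem_map_equiv, Equiv.prodComm_symm, Equiv.prodComm_apply,
      mem_filter, mem_offDiag, Prod.fst_swap, Prod.snd_swap]
    rintro x ⟨⟨hi, hj, hij⟩, h⟩ ⟨-, h'⟩
    exact hr _ hi _ hj hij ⟨h, h'⟩
  have hsub : S ∪ S.map (Equiv.prodComm ι ι).toEmbedding ⊆ M.offDiag := by
    refine union_subset (filter_subset _ _) fun x hx => ?_
    simp only [S, mem_map_equiv, Equiv.prodComm_symm, Equiv.prodComm_apply, mem_filter,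
      mem_offDiag, Prod.fst_swap, Prod.snd_swap] at hx ⊢
    exact ⟨hx.1.2.1, hx.1.1, hx.1.2.2.symm⟩
  calc 2 * #S = #(S ∪ S.map (Equiv.prodComm ι ι).toEmbedding) := by
        rw [card_union_of_disjoint hdisj, card_map, two_mul]
    _ ≤ #M.offDiag := card_le_card hsub
    _ = #M * (#M - 1) := by rw [offDiag_card, Nat.mul_sub_one]

theorem card_filter_add_card_add_le_of_matching {α β : Type*} [DecidableEq α] [DecidableEq β]
    {M T : Finset (α × β)} {r : α → β → Prop} [DecidableRel r]
    (hfst : Set.InjOn Prod.fst (M : Set (α × β))) (hsnd : Set.InjOn Prod.snd (M : Set (α × β)))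
    (hgrid : ∀ p ∈ M, ∀ q ∈ M, (p.1, q.2) ∈ T) (hdiag : ∀ p ∈ M, ¬r p.1 p.2)
    (hcross : ∀ p ∈ M, ∀ q ∈ M, p ≠ q → ¬(r p.1 q.2 ∧ r q.1 p.2)) :
    #{x ∈ T | r x.1 x.2} + #M + #M * (#M - 1) / 2 ≤ #T := by
  set cross : (α × β) × (α × β) → α × β := fun x => (x.1.1, x.2.2)
  have hinj : Set.InjOn cross (M ×ˢ M : Finset _) := by
    rintro ⟨p, q⟩ hpq ⟨p', q'⟩ hpq' h
    simp only [coe_product, Set.mem_prod, mem_coe, Prod.mk.injEq, cross] at hpq hpq' h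
    rw [hfst hpq.1 hpq'.1 h.1, hsnd hpq.2 hpq'.2 h.2]
  set D := (M ×ˢ M).image cross
  have hDT : D ⊆ T := by
    simp only [D, image_subset_iff, mem_product]
    exact fun x hx => hgrid _ hx.1 _ hx.2
  have hD : #D = #M * #M := by rw [card_image_of_injOn hinj, card_product]
  have hDr : 2 * #{x ∈ D | r x.1 x.2} ≤ #M * (#M - 1) := by
    rw [filter_image, card_image_of_injOn (hinj.mono (filter_subset _ _))]
    refine le_trans ?_ (two_mul_card_filter_offDiag_le M (fun p q => r p.1 q.2) hcross)
    refine Nat.mul_le_mul_left 2 (card_le_card fun x => ?_)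
    simp only [mem_filter, mem_product, mem_offDiag, cross]
    exact fun ⟨⟨hp, hq⟩, h⟩ => ⟨⟨hp, hq, fun hpq => hdiag _ hp (hpq ▸ h)⟩, h⟩
  have hTr : #{x ∈ T | r x.1 x.2} ≤ #{x ∈ D | r x.1 x.2} + #(T \ D) := by
    refine (card_le_card fun x hx => ?_).trans (card_union_le _ _)
    simp only [mem_union, mem_filter, mem_sdiff] at hx ⊢
    tauto
  have hsq : #M * #M = #M + #M * (#M - 1) := by
    rw [Nat.mul_sub_one, Nat.add_sub_cancel' (Nat.le_mul_self _)]
  have := card_le_card hDT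
  rw [card_sdiff_of_subset hDT] at hTr
  omega

namespace SimpleGraph

variable {V : Type*} {G : SimpleGraph V} {s t : Set V}

theorem IsBipartiteWith.mono {G' : SimpleGraph V} (h : G.IsBipartiteWith s t) (hle : G' ≤ G) :
    G'.IsBipartiteWith s t :=
  ⟨h.disjoint, fun _ _ hadj => h.mem_of_adj (hle hadj)⟩

theorem IsBipartiteWith.not_adj_of_mem_left (h : G.IsBipartiteWith s t) {v w : V} (hv : v ∈ s)
    (hw : w ∈ s) : ¬G.Adj v w :=
  fun hadj => Set.disjoint_left.mp h.disjoint hw (h.mem_of_mem_adj hv hadj)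

theorem IsBipartiteWith.ncard_edgeSet [Fintype V] [DecidableRel G.Adj] [DecidablePred (· ∈ s)]
    [DecidablePred (· ∈ t)] (h : G.IsBipartiteWith s t) :
    G.edgeSet.ncard = #{p ∈ s.toFinset ×ˢ t.toFinset | G.Adj p.1 p.2} := by
  set P := {p ∈ s.toFinset ×ˢ t.toFinset | G.Adj p.1 p.2}
  have hP : G.edgeSet = (fun p : V × V => s(p.1, p.2)) '' (P : Set (V × V)) := by
    ext e
    induction e using Sym2.ind with | _ v w => ?_
    simp only [P, mem_edgeSet, coe_filter, mem_product, Set.mem_toFinset, Set.mem_image,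
      Set.mem_ofPred_eq, Prod.exists, Sym2.eq_iff]
    constructor
    · intro hvw
      rcases h.mem_of_adj hvw with ⟨hv, hw⟩ | ⟨hv, hw⟩
      · exact ⟨v, w, ⟨⟨hv, hw⟩, hvw⟩, .inl ⟨rfl, rfl⟩⟩
      · exact ⟨w, v, ⟨⟨hw, hv⟩, hvw.symm⟩, .inr ⟨rfl, rfl⟩⟩
    · rintro ⟨a, b, ⟨-, hab⟩, ⟨rfl, rfl⟩ | ⟨rfl, rfl⟩⟩
      exacts [hab, hab.symm]
  have hinj : Set.InjOn (fun p : V × V => s(p.1, p.2)) (P : Set (V × V)) := by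
    rintro ⟨a, b⟩ hab ⟨a', b'⟩ hab' heq
    simp only [P, coe_filter, mem_product, Set.mem_toFinset, Set.mem_ofPred_eq] at hab hab'
    rcases Sym2.eq_iff.mp heq with ⟨rfl, rfl⟩ | ⟨rfl, rfl⟩
    · rfl
    · exact absurd hab.1.1 (Set.disjoint_left.mp h.disjoint.symm hab'.1.2)
  rw [hP, hinj.ncard_image, Set.ncard_coe_finset]

theorem IsBipartiteWith.not_edgesClose (h : G.IsBipartiteWith s t) {a₁ a₂ b₁ b₂ : V}
    (ha₁ : a₁ ∈ s) (ha₂ : a₂ ∈ s) (hb₁ : b₁ ∈ t) (hb₂ : b₂ ∈ t) (ha : a₁ ≠ a₂) (hb : b₁ ≠ b₂)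
    (h₁ : ¬G.Adj a₁ b₁) (h₂ : ¬G.Adj a₂ b₂) : ¬EdgesClose G s(a₁, b₂) s(a₂, b₁) := by
  rintro ⟨u, v, hu, hv, huv⟩
  have hst : ∀ x ∈ s, x ∉ t := fun _ hx => Set.disjoint_left.mp h.disjoint hx
  rw [Sym2.mem_iff] at hu hv
  rcases hu with rfl | rfl <;> rcases hv with rfl | rfl <;> rcases huv with rfl | huv
  · exact ha rfl
  · exact h.not_adj_of_mem_left ha₁ ha₂ huv
  · exact hst _ ha₁ hb₁
  · exact h₁ huv
  · exact hst _ ha₂ hb₂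
  · exact h₂ huv.symm
  · exact hb rfl
  · exact h.symm.not_adj_of_mem_left hb₂ hb₁ huv

end SimpleGraph

theorem stmt10_general {V : Type*} [Fintype V] (G : SimpleGraph V)
    (A B : Set V) (hdisj : Disjoint A B)
    (hbip : ∀ x y, G.Adj x y → (x ∈ A ∧ y ∈ B) ∨ (x ∈ B ∧ y ∈ A))
    (H : G.Subgraph)
    (hclique : ∀ e ∈ H.edgeSet, ∀ f ∈ H.edgeSet, EdgesClose G e f)
    (M : Finset (V × V))
    (hM : ∀ p ∈ M, p.1 ∈ A ∧ p.2 ∈ B ∧ ¬ G.Adj p.1 p.2)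
    (hmatch : ∀ p ∈ M, ∀ q ∈ M, p ≠ q → p.1 ≠ q.1 ∧ p.2 ≠ q.2) :
    H.edgeSet.ncard + M.card + M.card * (M.card - 1) / 2 ≤ A.ncard * B.ncard := by
  classical
  have hG : G.IsBipartiteWith A B := ⟨hdisj, fun x y => hbip x y⟩
  have hfst : Set.InjOn Prod.fst (M : Set (V × V)) := fun p hp q hq h =>
    by_contra fun hpq => (hmatch p hp q hq hpq).1 h
  have hsnd : Set.InjOn Prod.snd (M : Set (V × V)) := fun p hp q hq h =>
    by_contra fun hpq => (hmatch p hp q hq hpq).2 h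
  rw [← H.edgeSet_spanningCoe, (hG.mono H.spanningCoe_le).ncard_edgeSet,
    Set.ncard_eq_toFinset_card' A, Set.ncard_eq_toFinset_card' B, ← card_product]
  refine card_filter_add_card_add_le_of_matching (r := H.spanningCoe.Adj) hfst hsnd
    (fun p hp q hq => ?_) (fun p hp h => (hM p hp).2.2 (H.adj_sub h))
    (fun p hp q hq hpq ⟨h₁, h₂⟩ => ?_)
  · simp [(hM p hp).1, (hM q hq).2.1]
  · obtain ⟨hpA, hpB, hpG⟩ := hM p hp
    obtain ⟨hqA, hqB, hqG⟩ := hM q hq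
    obtain ⟨hpq₁, hpq₂⟩ := hmatch p hp q hq hpq
    exact hG.not_edgesClose hpA hqA hpB hqB hpq₁ hpq₂ hpG hqG (hclique _ h₁ _ h₂)

/-- Let `G` be bipartite with parts `A`, `B` and `H` a subgraph whose edge set
is a clique in `L(G)²`.  If `M` is a matching of size `m` in the bipartite
complement of `G`, then `|E(H)| ≤ |A|·|B| − m − m(m−1)/2` (stated additively to
avoid truncated subtraction). -/
theorem stmt10 {V : Type*} [Fintype V] (G : SimpleGraph V)
    (A B : Set V) (hdisj : Disjoint A B) (hcover : A ∪ B = Set.univ)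
    (hbip : ∀ x y, G.Adj x y → (x ∈ A ∧ y ∈ B) ∨ (x ∈ B ∧ y ∈ A))
    (H : G.Subgraph)
    (hclique : ∀ e ∈ H.edgeSet, ∀ f ∈ H.edgeSet, EdgesClose G e f)
    (M : Finset (V × V))
    (hM : ∀ p ∈ M, p.1 ∈ A ∧ p.2 ∈ B ∧ ¬ G.Adj p.1 p.2)
    (hmatch : ∀ p ∈ M, ∀ q ∈ M, p ≠ q → p.1 ≠ q.1 ∧ p.2 ≠ q.2) :
    H.edgeSet.ncard + M.card + M.card * (M.card - 1) / 2 ≤ A.ncard * B.ncard :=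
  stmt10_general G A B hdisj hbip H hclique M hM hmatch
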